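/- arXiv:1904.10331 — 5 statements merged into one kernel-verified Lean document; each statement's English description precedes it below -/
import Mathlib

section
/- Let s ≥ 2 and 2 ≤ d ≤ s. Define p^(d)_i = C(s-i, d-1)/C(s, d) for 1 ≤ i ≤ s-d+1 and p^(d)_i = 0 for i ≥ s-d+2. Then for every k with 1 ≤ k ≤ s, Σ_{i=k}^s p^(d)_i ≤ Σ_{i=k}^s p^(2)_i, i.e., p^(d) ⪯_GSC p^(2). -/
/-!
The tail sum `∑_{i ≥ k} p^(d)_i` is, by the hockey-stick identity, `C(m, d) / C(s, d)` with
`m = s - k + 1`: the probability that all `d` sampled queues fall among the `m` longest ones.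
This ratio decreases in `d`, because `C(n, d) C(d, e) = C(n, e) C(n - e, d - e)` factors it as
`C(m, e) / C(s, e)` times `C(m - e, d - e) / C(s - e, d - e) ≤ 1`.
-/

/-- Power-of-d allocation vector: `p^(d)_i = C(s-i, d-1)/C(s, d)` for `i ≤ s-d+1`, else 0. -/
noncomputable def pwVec (s d i : ℕ) : ℝ :=
  if i ≤ s - d + 1 then (Nat.choose (s - i) (d - 1) : ℝ) / (Nat.choose s d : ℝ) else 0

open Finset

theorem pwVec_of_le {s d i : ℕ} (hi : i ≤ s) :
    pwVec s d i = ((s - i).choose (d - 1) : ℝ) / s.choose d := by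
  unfold pwVec
  split_ifs with h
  · rfl
  · rw [Nat.choose_eq_zero_of_lt (by omega), Nat.cast_zero, zero_div]

theorem sum_range_succ_choose (n r : ℕ) :
    ∑ j ∈ range (n + 1), j.choose r = (n + 1).choose (r + 1) := by
  induction n with
  | zero => simp [Nat.choose_succ_succ]
  | succ n ih => rw [sum_range_succ, ih, Nat.choose_succ_succ' (n + 1), add_comm]

theorem sum_Icc_choose_sub (r : ℕ) {s k : ℕ} (hk : k ≤ s) :
    ∑ i ∈ Icc k s, (s - i).choose r = (s - k + 1).choose (r + 1) := by
  rw [← Ico_add_one_right_eq_Icc, sum_Ico_reflect (·.choose r) k le_rfl, Nat.sub_self,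
    ← range_eq_Ico, show s + 1 - k = s - k + 1 by omega, sum_range_succ_choose]

theorem sum_Icc_pwVec {s d k : ℕ} (hd : 1 ≤ d) (hk : k ≤ s) :
    ∑ i ∈ Icc k s, pwVec s d i = ((s - k + 1).choose d : ℝ) / s.choose d := by
  rw [sum_congr rfl fun i hi => pwVec_of_le (mem_Icc.1 hi).2, ← sum_div, ← Nat.cast_sum,
    sum_Icc_choose_sub _ hk, Nat.sub_add_cancel hd]

theorem choose_mul_choose_le_choose_mul_choose {m s d e : ℕ} (hms : m ≤ s) (hed : e ≤ d) :
    m.choose d * s.choose e ≤ m.choose e * s.choose d := by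
  refine Nat.le_of_mul_le_mul_right ?_ (Nat.choose_pos hed)
  calc m.choose d * s.choose e * d.choose e
      = m.choose e * (m - e).choose (d - e) * s.choose e := by
        rw [mul_right_comm, Nat.choose_mul hed]
    _ ≤ m.choose e * (s - e).choose (d - e) * s.choose e := by gcongr
    _ = m.choose e * s.choose d * d.choose e := by
        rw [mul_assoc, mul_comm _ (s.choose e), ← Nat.choose_mul hed, mul_assoc]

theorem choose_div_choose_le_choose_div_choose {m s d e : ℕ} (hms : m ≤ s) (hed : e ≤ d) :
    (m.choose d : ℝ) / s.choose d ≤ (m.choose e : ℝ) / s.choose e := by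
  rcases le_or_gt d s with hds | hsd
  · rw [div_le_div_iff₀ (by exact_mod_cast Nat.choose_pos hds)
      (by exact_mod_cast Nat.choose_pos (hed.trans hds))]
    exact_mod_cast choose_mul_choose_le_choose_mul_choose hms hed
  · rw [Nat.choose_eq_zero_of_lt hsd, Nat.cast_zero, div_zero]
    positivity

theorem stmt_2_general (s d : ℕ) (hd2 : 2 ≤ d) :
    ∀ k, 1 ≤ k → k ≤ s →
      ∑ i ∈ Finset.Icc k s, pwVec s d i ≤ ∑ i ∈ Finset.Icc k s, pwVec s 2 i := by
  intro k _ hks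
  rw [sum_Icc_pwVec (by omega) hks, sum_Icc_pwVec one_le_two hks]
  exact choose_div_choose_le_choose_div_choose (by omega) hd2

/-- `p^(d) ⪯_GSC p^(2)` for `2 ≤ d ≤ s`. -/
theorem stmt_2 (s d : ℕ) (hs : 2 ≤ s) (hd2 : 2 ≤ d) (hds : d ≤ s) :
    ∀ k, 1 ≤ k → k ≤ s →
      ∑ i ∈ Finset.Icc k s, pwVec s d i ≤ ∑ i ∈ Finset.Icc k s, pwVec s 2 i :=
  stmt_2_general s d hd2
end

section
/- Let s ≥ 2 and 2 ≤ m ≤ s. Define π_{ρ,m} = ((sρ)^{m-1}/(m-1)!)/(Σ_{i=0}^{m-1} (sρ)^i/i!) and V_cr(1,m) = sup{ ρ ∈ (0,1) : sρ · π_{ρ,m} < s − m + 1 }. Then V_cr(1,m) < 1 for every m ∈ {2,...,s}. -/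
/-! Put `a = sρ`, `tₙ = aⁿ/n!` and `Sₙ = ∑_{i ≤ n} tᵢ`, so that `π_{ρ,n+1} = tₙ / Sₙ`.
Since `(n+1) tₙ₊₁ = a tₙ`, the quantity `fₙ = a tₙ - (a - n) Sₙ` satisfies `fₙ₊₁ = fₙ + Sₙ` and
`f₀ = 0`; as `Sₙ ≥ 1` this gives `fₙ ≥ n`, i.e. `sρ π_{ρ,n+1} > sρ - n` for `n ≥ 1`.
At `ρ = 1` the right side is `s - m + 1`, so by continuity the defining inequality of `V_cr(1,m)`
fails on a whole interval `(δ, 1)`, which bounds the supremum by `δ`. -/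

noncomputable def erlangB (s : ℕ) (ρ : ℝ) (m : ℕ) : ℝ :=
  ((s * ρ) ^ (m - 1) / (Nat.factorial (m - 1) : ℝ))
    / (∑ i ∈ Finset.range m, (s * ρ) ^ i / (Nat.factorial i : ℝ))

open Finset Filter Topology

lemma one_le_sum_range_pow_div_factorial {a : ℝ} (ha : 0 ≤ a) (n : ℕ) :
    1 ≤ ∑ i ∈ range (n + 1), a ^ i / i.factorial := by
  rw [sum_range_succ']
  simp only [pow_zero, Nat.factorial_zero, Nat.cast_one, div_one, le_add_iff_nonneg_left]
  exact sum_nonneg fun i _ => by positivity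

lemma natCast_le_mul_pow_div_factorial_sub_mul_sum {a : ℝ} (ha : 0 ≤ a) (n : ℕ) :
    (n : ℝ) ≤ a * (a ^ n / n.factorial) - (a - n) * ∑ i ∈ range (n + 1), a ^ i / i.factorial := by
  induction n with
  | zero => simp
  | succ n ih =>
    have hS := one_le_sum_range_pow_div_factorial ha n
    have hfac : ((n + 1).factorial : ℝ) = (n + 1) * n.factorial := by
      push_cast [Nat.factorial_succ]; ring
    have hstep : a ^ (n + 1) / ((n + 1).factorial : ℝ) * (n + 1) = a * (a ^ n / n.factorial) := by
      rw [hfac]; field_simp; ring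
    rw [sum_range_succ (n := n + 1)]
    push_cast
    nlinarith

lemma sub_lt_mul_erlangB (s : ℕ) {ρ : ℝ} (hρ : 0 ≤ ρ) {n : ℕ} (hn : 1 ≤ n) :
    s * ρ - n < s * ρ * erlangB s ρ (n + 1) := by
  have ha : 0 ≤ (s : ℝ) * ρ := by positivity
  have hS := one_le_sum_range_pow_div_factorial ha n
  have hf := natCast_le_mul_pow_div_factorial_sub_mul_sum ha n
  have hn' : (1 : ℝ) ≤ n := by exact_mod_cast hn
  rw [erlangB, Nat.add_sub_cancel, ← mul_div_assoc, lt_div_iff₀ (by linarith)]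
  linarith

lemma continuousAt_erlangB (s m : ℕ) {ρ : ℝ} (hρ : 0 ≤ ρ) (hm : 1 ≤ m) :
    ContinuousAt (fun x => erlangB s x m) ρ := by
  obtain ⟨n, rfl⟩ := Nat.exists_eq_add_of_le' hm
  have hS := one_le_sum_range_pow_div_factorial (by positivity : 0 ≤ (s : ℝ) * ρ) n
  unfold erlangB
  exact ContinuousAt.div (by fun_prop) (by fun_prop) (by linarith)

lemma sSup_lt_of_eventually_notMem {S : Set ℝ} {b : ℝ} (hb : 0 < b) (hS : ∀ x ∈ S, x < b)
    (h : ∀ᶠ x in 𝓝[<] b, x ∉ S) : sSup S < b := by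
  obtain ⟨δ, hδ, hδS⟩ := mem_nhdsLT_iff_exists_Ioo_subset.mp h
  refine (Real.sSup_le (fun x hx => ?_) (le_max_right δ 0)).trans_lt (max_lt hδ hb)
  by_contra! hlt
  exact hδS ⟨(le_max_left δ 0).trans_lt hlt, hS x hx⟩ hx

theorem stmt_11_general (s m : ℕ) (hm2 : 2 ≤ m) :
    sSup {ρ : ℝ | ρ ∈ Set.Ioo (0 : ℝ) 1 ∧ s * ρ * erlangB s ρ m < (s : ℝ) - m + 1} < 1 := by
  obtain ⟨n, rfl⟩ := Nat.exists_eq_add_of_le' (by omega : 1 ≤ m)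
  have hcont : ContinuousAt (fun ρ : ℝ => s * ρ * erlangB s ρ (n + 1)) 1 :=
    (continuousAt_const.mul continuousAt_id).mul (continuousAt_erlangB s _ zero_le_one (by omega))
  have hone : (s : ℝ) - (n + 1 : ℕ) + 1 < s * 1 * erlangB s 1 (n + 1) := by
    push_cast
    linarith [sub_lt_mul_erlangB s zero_le_one (by omega : 1 ≤ n)]
  refine sSup_lt_of_eventually_notMem one_pos (fun ρ hρ => hρ.1.2) ?_
  filter_upwards [nhdsWithin_le_nhds (hcont.eventually_const_lt hone)] with ρ hρ hmem
  exact hρ.not_gt hmem.2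

/-- `V_cr(1,m) = sup{ρ ∈ (0,1) : sρ·π_{ρ,m} < s−m+1} < 1` for `2 ≤ m ≤ s`. -/
theorem stmt_11 (s m : ℕ) (hs : 2 ≤ s) (hm2 : 2 ≤ m) (hms : m ≤ s) :
    sSup {ρ : ℝ | ρ ∈ Set.Ioo (0 : ℝ) 1 ∧ s * ρ * erlangB s ρ m < (s : ℝ) - m + 1} < 1 :=
  stmt_11_general s m hm2
end

section
/- Let s ≥ 2, 2 ≤ m ≤ s−1, and ρ > 0. Suppose sρ·π_{ρ,m+1} < s−m and ρ ≥ ((s−m)(s+1))/((s−m+1)s). Then sρ·π_{ρ,m} < s−m+1. -/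
open Finset

section ErlangB

variable {s : ℕ} {ρ : ℝ} {m : ℕ}

lemma sum_range_pow_div_factorial_pos {c : ℝ} (hc : 0 < c) (hm : 1 ≤ m) :
    0 < ∑ i ∈ range m, c ^ i / (i.factorial : ℝ) :=
  sum_pos (fun _ _ => by positivity) ⟨0, mem_range.2 hm⟩

lemma erlangB_pos (hc : 0 < (s : ℝ) * ρ) (hm : 1 ≤ m) : 0 < erlangB s ρ m :=
  div_pos (by positivity) (sum_range_pow_div_factorial_pos hc hm)

lemma inv_erlangB_succ (hc : 0 < (s : ℝ) * ρ) (hm : 1 ≤ m) :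
    (erlangB s ρ (m + 1))⁻¹ = 1 + m / (s * ρ * erlangB s ρ m) := by
  obtain ⟨n, rfl⟩ : ∃ n, m = n + 1 := ⟨m - 1, by omega⟩
  have hB := sum_range_pow_div_factorial_pos hc hm
  simp only [erlangB, Nat.add_sub_cancel, sum_range_succ _ (n + 1), Nat.factorial_succ]
  generalize (s : ℝ) * ρ = c at hc hB ⊢
  push_cast
  field_simp
  ring

end ErlangB

theorem stmt_12_general (s m : ℕ) (hm2 : 2 ≤ m) (hm : m ≤ s - 1)
    (ρ : ℝ) (hρ : 0 < ρ)
    (h1 : s * ρ * erlangB s ρ (m + 1) < (s : ℝ) - m)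
    (h2 : ρ ≥ (((s : ℝ) - m) * ((s : ℝ) + 1)) / ((((s : ℝ) - m + 1)) * s)) :
    s * ρ * erlangB s ρ m < (s : ℝ) - m + 1 := by
  have hm1 : 1 ≤ m := by omega
  have hk : (1 : ℝ) ≤ s - m := by
    have : (m : ℝ) + 1 ≤ s := by exact_mod_cast (by omega : m + 1 ≤ s)
    linarith
  have hs : (0 : ℝ) < s := by exact_mod_cast (by omega : 0 < s)
  have hc : (0 : ℝ) < s * ρ := mul_pos hs hρ
  have hπ := erlangB_pos hc hm1
  have hπ' := erlangB_pos (m := m + 1) hc (by omega)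
  have hρ_bound : 1 + m / ((s : ℝ) - m + 1) ≤ s * ρ / (s - m) :=
    calc 1 + m / ((s : ℝ) - m + 1)
        = s * ((((s : ℝ) - m) * ((s : ℝ) + 1)) / ((((s : ℝ) - m + 1)) * s)) / (s - m) := by
          field_simp
          ring
      _ ≤ s * ρ / (s - m) := by gcongr
  have hrec : s * ρ / (s - m) < 1 + m / (s * ρ * erlangB s ρ m) := by
    rw [← inv_erlangB_succ hc hm1, div_lt_iff₀ (by linarith), ← div_eq_inv_mul,
      lt_div_iff₀ hπ']
    linarith
  have hmpos : (0 : ℝ) < m := by exact_mod_cast hm1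
  exact (div_lt_div_iff_of_pos_left hmpos (by positivity) (by positivity)).1 (by linarith)

/-- induction step: if `sρπ_{ρ,m+1} < s−m` and `ρ ≥ ((s−m)(s+1))/((s−m+1)s)`,
then `sρπ_{ρ,m} < s−m+1`. -/
theorem stmt_12 (s m : ℕ) (hs : 2 ≤ s) (hm2 : 2 ≤ m) (hm : m ≤ s - 1)
    (ρ : ℝ) (hρ : 0 < ρ)
    (h1 : s * ρ * erlangB s ρ (m + 1) < (s : ℝ) - m)
    (h2 : ρ ≥ (((s : ℝ) - m) * ((s : ℝ) + 1)) / ((((s : ℝ) - m + 1)) * s)) :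
    s * ρ * erlangB s ρ m < (s : ℝ) - m + 1 :=
  stmt_12_general s m hm2 hm ρ hρ h1 h2
end

section
/- Let s ≥ 2, λ, μ > 0, ρ = λ/(sμ), and p ∈ (0,1]. Define π = λ/(μ + λp) = sρ/(1 + sρp). Then λ·p·π > (s−1)μ if and only if ρ > V_cr(p), where V_cr(p) = ((s−1)/(2s))(1 + √(1 + 4/(p(s−1)))). -/
/-- With `π = λ/(μ + λp)`, the overflow rate condition `λpπ > (s−1)μ`
holds iff `ρ > V_cr(p)`. -/
theorem stmt_15 (s : ℕ) (hs : 2 ≤ s) (lam mu : ℝ) (hlam : 0 < lam) (hmu : 0 < mu)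
    (ρ : ℝ) (hρ : ρ = lam / (s * mu)) (p : ℝ) (hp0 : 0 < p) (hp1 : p ≤ 1) :
    lam * p * (lam / (mu + lam * p)) > ((s : ℝ) - 1) * mu
      ↔ ρ > (((s : ℝ) - 1) / (2 * s)) * (1 + Real.sqrt (1 + 4 / (p * ((s : ℝ) - 1)))) := by
  have hs2 : (2:ℝ) ≤ (s:ℝ) := by exact_mod_cast hs
  set a : ℝ := (s:ℝ) - 1 with ha
  have ha1 : 1 ≤ a := by simp [ha]; linarith
  have ha0 : 0 < a := by linarith
  have hpa : 0 < p * a := mul_pos hp0 ha0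
  have harg : 0 ≤ 1 + 4 / (p * a) := by positivity
  set q : ℝ := Real.sqrt (1 + 4 / (p * a)) with hqdef
  have hq2 : q ^ 2 = 1 + 4 / (p * a) := Real.sq_sqrt harg
  have hq0 : 0 ≤ q := Real.sqrt_nonneg _
  have h4pos : 0 < 4 / (p * a) := by positivity
  have hq1 : 1 < q := by nlinarith
  have h4 : p * a * q ^ 2 = p * a + 4 := by
    rw [hq2]; field_simp
  have hden : 0 < mu + lam * p := by positivity
  have hkey : p * (lam - a / 2 * (1 + q) * mu) * (lam - a / 2 * (1 - q) * mu)
      = p * lam ^ 2 - p * a * mu * lam - a * mu ^ 2 := by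
    linear_combination (-(mu ^ 2 * a) / 4) * h4
  have hL : (lam * p * (lam / (mu + lam * p)) > a * mu)
      ↔ p * lam ^ 2 - p * a * mu * lam - a * mu ^ 2 > 0 := by
    rw [gt_iff_lt, ← mul_div_assoc, lt_div_iff₀ hden, gt_iff_lt]
    constructor <;> intro h <;> nlinarith [h]
  have hsmu : 0 < (s:ℝ) * mu := by positivity
  have heq : a / (2 * s) * (1 + q) * ((s:ℝ) * mu) = a / 2 * (1 + q) * mu := by
    have hsne : (s:ℝ) ≠ 0 := by positivity
    field_simp
  have hR : (ρ > a / (2 * s) * (1 + q)) ↔ lam > a / 2 * (1 + q) * mu := by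
    rw [hρ, gt_iff_lt, lt_div_iff₀ hsmu, heq, gt_iff_lt]
  rw [hL, hR]
  have hfac2 : 0 < lam - a / 2 * (1 - q) * mu := by
    nlinarith [mul_pos (mul_pos ha0 hmu) (sub_pos.2 hq1)]
  constructor
  · intro h
    by_contra h'
    push_neg at h'
    have h1 : lam - a / 2 * (1 + q) * mu ≤ 0 := by linarith
    have h2 := mul_nonpos_of_nonpos_of_nonneg (mul_nonpos_of_nonneg_of_nonpos hp0.le h1) hfac2.le
    rw [hkey] at h2
    linarith
  · intro h
    have h1 : 0 < lam - a / 2 * (1 + q) * mu := by linarith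
    have h2 := mul_pos (mul_pos hp0 h1) hfac2
    rw [hkey] at h2
    linarith
end

section
/- Let s ≥ 2, λ, μ > 0 with λ < sμ, and let p ∈ [0,1]^s be a probability vector with p ⪯_GSC (1/s,...,1/s). Then for every nondecreasing x ∈ ℤ₊^s with Σ_{i=1}^s x_i > s(λ + sμ)/(2(sμ − λ)), the one-step drift D(x) = Σ_{i=1}^s (λ/(λ + pos(x)μ)) p_i ((x_i+1)² − x_i²) + Σ_{i=1}^s (μ/(λ + pos(x)μ)) (((x_i−1)⁺)² − x_i²) is strictly negative, where pos(x) is the number of strictly positive coordinates of x. -/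
/-!
Both jump kinds change `V` linearly: an arrival at queue `i` adds `2 xᵢ + 1`, a service at a
busy queue adds `1 - 2 xᵢ`. Hence the drift is
`(λ (2 Σ pᵢ xᵢ + 1) + μ (pos(x) - 2 Σ xᵢ)) / (λ + pos(x) μ)`.
Since `x` is nondecreasing, Abel summation against the tail sums turns `p ⪯_GSC` uniform into
`Σ pᵢ xᵢ ≤ (Σ xᵢ) / s`, and with `pos(x) ≤ s` the numerator is at most
`λ + s μ - 2 (s μ - λ) (Σ xᵢ) / s`, which is negative once `Σ xᵢ` exceeds the threshold.
-/

open Finset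

lemma sum_Icc_one_sub_pred (y : ℕ → ℝ) (i : ℕ) :
    ∑ k ∈ Icc 1 i, (y k - y (k - 1)) = y i - y 0 := by
  induction i with
  | zero => simp
  | succ n ih =>
    rw [sum_Icc_succ_top (by omega), ih, Nat.add_sub_cancel]
    ring

lemma sum_Icc_mul_eq_sum_tail_mul_sub (s : ℕ) (a y : ℕ → ℝ) (hy : y 0 = 0) :
    ∑ i ∈ Icc 1 s, a i * y i
      = ∑ k ∈ Icc 1 s, (∑ i ∈ Icc k s, a i) * (y k - y (k - 1)) := by
  have hy_eq : ∀ i, y i = ∑ k ∈ Icc 1 i, (y k - y (k - 1)) := fun i => by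
    rw [sum_Icc_one_sub_pred, hy, sub_zero]
  rw [sum_congr rfl fun i _ => congrArg (a i * ·) (hy_eq i)]
  simp_rw [mul_sum, sum_mul]
  exact sum_comm' fun i k => by simp only [mem_Icc]; omega

lemma sum_mul_le_sum_mul_of_tail_sum_le {s : ℕ} {a b x : ℕ → ℝ}
    (htail : ∀ k, 1 ≤ k → k ≤ s → ∑ i ∈ Icc k s, a i ≤ ∑ i ∈ Icc k s, b i)
    (hx : MonotoneOn x (Icc 1 s)) (hx1 : 0 ≤ x 1) :
    ∑ i ∈ Icc 1 s, a i * x i ≤ ∑ i ∈ Icc 1 s, b i * x i := by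
  set y : ℕ → ℝ := fun k => if k = 0 then 0 else x k
  have hxy : ∀ c : ℕ → ℝ, ∑ i ∈ Icc 1 s, c i * x i = ∑ i ∈ Icc 1 s, c i * y i :=
    fun c => sum_congr rfl fun i hi => by simp [y, show i ≠ 0 by grind]
  have hinc : ∀ k ∈ Icc 1 s, 0 ≤ y k - y (k - 1) := by
    intro k hk
    obtain ⟨hk1, hks⟩ := mem_Icc.mp hk
    rcases hk1.eq_or_lt with rfl | hk1
    · simpa [y] using hx1
    · have hle : x (k - 1) ≤ x k :=
        hx (mem_Icc.mpr ⟨by omega, by omega⟩) hk (Nat.sub_le k 1)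
      simpa [y, show k ≠ 0 by omega, show k - 1 ≠ 0 by omega] using hle
  rw [hxy, hxy, sum_Icc_mul_eq_sum_tail_mul_sub s a y rfl,
    sum_Icc_mul_eq_sum_tail_mul_sub s b y rfl]
  refine sum_le_sum fun k hk => mul_le_mul_of_nonneg_right ?_ (hinc k hk)
  exact htail k (mem_Icc.mp hk).1 (mem_Icc.mp hk).2

lemma sum_mul_add_one_sq_sub_sq {ι : Type*} (t : Finset ι) (p x : ι → ℝ) :
    ∑ i ∈ t, p i * ((x i + 1) ^ 2 - x i ^ 2) = 2 * ∑ i ∈ t, p i * x i + ∑ i ∈ t, p i := by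
  rw [mul_sum, ← sum_add_distrib]
  exact sum_congr rfl fun i _ => by ring

lemma max_sub_one_zero_sq_sub_sq (n : ℕ) :
    max ((n : ℝ) - 1) 0 ^ 2 - (n : ℝ) ^ 2 = (if 0 < n then 1 else 0) - 2 * n := by
  rcases Nat.eq_zero_or_pos n with rfl | hn
  · simp
  · have hn' : (1 : ℝ) ≤ n := by exact_mod_cast hn
    rw [max_eq_left (by linarith), if_pos hn]
    ring

lemma sum_max_sub_one_zero_sq_sub_sq {ι : Type*} (t : Finset ι) (x : ι → ℕ) :
    ∑ i ∈ t, (max ((x i : ℝ) - 1) 0 ^ 2 - (x i : ℝ) ^ 2)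
      = #{i ∈ t | 0 < x i} - 2 * ∑ i ∈ t, (x i : ℝ) := by
  simp_rw [max_sub_one_zero_sq_sub_sq, sum_sub_distrib, sum_boole, mul_sum]

theorem stmt_18_general (s : ℕ) (lam mu : ℝ) (hlam : 0 < lam) (hmu : 0 < mu)
    (hload : lam < s * mu)
    (p : ℕ → ℝ)
    (hp1 : ∑ i ∈ Finset.Icc 1 s, p i = 1)
    (hgsc : ∀ k, 1 ≤ k → k ≤ s →
      ∑ i ∈ Finset.Icc k s, p i ≤ ∑ i ∈ Finset.Icc k s, (1 / (s : ℝ)))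
    (x : ℕ → ℕ) (hmono : ∀ i j, 1 ≤ i → i ≤ j → j ≤ s → x i ≤ x j)
    (hbig : (s : ℝ) * (lam + s * mu) / (2 * (s * mu - lam))
      < ∑ i ∈ Finset.Icc 1 s, (x i : ℝ)) :
    (∑ i ∈ Finset.Icc 1 s,
        (lam / (lam + ((Finset.Icc 1 s).filter (fun i => 0 < x i)).card * mu)) * p i *
          (((x i : ℝ) + 1) ^ 2 - (x i : ℝ) ^ 2))
      + (∑ i ∈ Finset.Icc 1 s,
          (mu / (lam + ((Finset.Icc 1 s).filter (fun i => 0 < x i)).card * mu)) *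
            ((max ((x i : ℝ) - 1) 0) ^ 2 - (x i : ℝ) ^ 2)) < 0 := by
  set N : ℕ := #{i ∈ Icc 1 s | 0 < x i}
  set S : ℝ := ∑ i ∈ Icc 1 s, (x i : ℝ)
  set T : ℝ := ∑ i ∈ Icc 1 s, p i * x i
  have hs_pos : (0 : ℝ) < s := pos_of_mul_pos_left (hlam.trans hload) hmu.le
  have hN : (N : ℝ) ≤ s := by exact_mod_cast (card_filter_le _ _).trans (Nat.card_Icc 1 s).le
  have hT : s * T ≤ S := by
    have hmaj := sum_mul_le_sum_mul_of_tail_sum_le (x := fun i => (x i : ℝ)) hgsc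
      (fun i hi j hj hij => Nat.cast_le.mpr (hmono i j (mem_Icc.mp hi).1 hij (mem_Icc.mp hj).2))
      (Nat.cast_nonneg _)
    rw [← mul_sum] at hmaj
    calc s * T ≤ s * (1 / s * S) := mul_le_mul_of_nonneg_left hmaj hs_pos.le
      _ = S := by field_simp
  have hS : s * (lam + s * mu) < 2 * (s * mu - lam) * S := by
    rwa [div_lt_iff₀' (by linarith)] at hbig
  have hnum : lam * (2 * T + 1) + mu * (N - 2 * S) < 0 := by
    nlinarith [mul_le_mul_of_nonneg_left hT hlam.le, mul_le_mul_of_nonneg_left hN hmu.le]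
  simp_rw [mul_assoc, ← mul_sum]
  rw [sum_mul_add_one_sq_sub_sq, hp1, sum_max_sub_one_zero_sq_sub_sq, div_mul_eq_mul_div,
    div_mul_eq_mul_div, ← add_div]
  exact div_neg_of_neg_of_pos hnum (by positivity)

/-- negative drift of the Lyapunov function `V(x) = Σ x_i²` outside a
compact set, when `p ⪯_GSC` uniform and `λ < sμ`. -/
theorem stmt_18 (s : ℕ) (hs : 2 ≤ s) (lam mu : ℝ) (hlam : 0 < lam) (hmu : 0 < mu)
    (hload : lam < s * mu)
    (p : ℕ → ℝ) (hp0 : ∀ i ∈ Finset.Icc 1 s, 0 ≤ p i)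
    (hp1 : ∑ i ∈ Finset.Icc 1 s, p i = 1)
    (hgsc : ∀ k, 1 ≤ k → k ≤ s →
      ∑ i ∈ Finset.Icc k s, p i ≤ ∑ i ∈ Finset.Icc k s, (1 / (s : ℝ)))
    (x : ℕ → ℕ) (hmono : ∀ i j, 1 ≤ i → i ≤ j → j ≤ s → x i ≤ x j)
    (hbig : (s : ℝ) * (lam + s * mu) / (2 * (s * mu - lam))
      < ∑ i ∈ Finset.Icc 1 s, (x i : ℝ)) :
    (∑ i ∈ Finset.Icc 1 s,
        (lam / (lam + ((Finset.Icc 1 s).filter (fun i => 0 < x i)).card * mu)) * p i *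
          (((x i : ℝ) + 1) ^ 2 - (x i : ℝ) ^ 2))
      + (∑ i ∈ Finset.Icc 1 s,
          (mu / (lam + ((Finset.Icc 1 s).filter (fun i => 0 < x i)).card * mu)) *
            ((max ((x i : ℝ) - 1) 0) ^ 2 - (x i : ℝ) ^ 2)) < 0 :=
  stmt_18_general s lam mu hlam hmu hload p hp1 hgsc x hmono hbig
end
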